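/- arXiv:2308.09261 — 2 statements merged into one kernel-verified Lean document; each statement's English description precedes it below -/
import Mathlib

section
/- For all vectors x, y, e ∈ H with ‖e‖_A = 1 and every nonzero complex number α, one has |⟨x,e⟩_A · ⟨e,y⟩_A| ≤ ( |⟨x,y⟩_A| + max{1, |α − 1|}·‖x‖_A·‖y‖_A ) / |α|. -/
noncomputable section

open scoped ComplexInnerProductSpace

variable {H : Type*} [NormedAddCommGroup H] [InnerProductSpace ℂ H] [CompleteSpace H]

/-- The semi-inner product induced by a positive operator `A`:
`⟨x,y⟩_A = ⟨Ax,y⟩` (linear in the first argument, following the paper's convention). -/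
def innerA (A : H →L[ℂ] H) (x y : H) : ℂ := ⟪y, A x⟫

/-- The seminorm induced by `A`: `‖x‖_A = ⟨Ax,x⟩^{1/2}`. -/
def normA (A : H →L[ℂ] H) (x : H) : ℝ := Real.sqrt (innerA A x x).re

/-- The `A`-numerical radius `w_A(T) = sup { |⟨Tx,x⟩_A| : ‖x‖_A = 1 }`. -/
def wA (A T : H →L[ℂ] H) : ℝ :=
  sSup {r : ℝ | ∃ x : H, normA A x = 1 ∧ r = ‖innerA A (T x) x‖}

/-- The `A`-Crawford number `c_A(T) = inf { |⟨Tx,x⟩_A| : ‖x‖_A = 1 }`. -/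
def cA (A T : H →L[ℂ] H) : ℝ :=
  sInf {r : ℝ | ∃ x : H, normA A x = 1 ∧ r = ‖innerA A (T x) x‖}

/-- The `A`-operator seminorm `‖T‖_A = sup { ‖Tx‖_A : ‖x‖_A = 1 }`. -/
def opNormA (A T : H →L[ℂ] H) : ℝ :=
  sSup {r : ℝ | ∃ x : H, normA A x = 1 ∧ r = normA A (T x)}

/-- The `A`-Euclidean operator radius of the pair `(B, C)`. -/
def wAe (A B C : H →L[ℂ] H) : ℝ :=
  sSup {r : ℝ | ∃ x : H, normA A x = 1 ∧
    r = Real.sqrt (‖innerA A (B x) x‖^2 + ‖innerA A (C x) x‖^2)}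

/-- The `A`-Euclidean operator seminorm of the pair `(B, C)`. -/
def normAe (A B C : H →L[ℂ] H) : ℝ :=
  sSup {r : ℝ | ∃ x : H, normA A x = 1 ∧
    r = Real.sqrt ((normA A (B x))^2 + (normA A (C x))^2)}

/-- `Re_A(T) = (T + T♯)/2`, where `Ts` is an `A`-adjoint of `T`. -/
def ReA (T Ts : H →L[ℂ] H) : H →L[ℂ] H := (2 : ℂ)⁻¹ • (T + Ts)

/-- `Im_A(T) = (T - T♯)/(2i)`, where `Ts` is an `A`-adjoint of `T`. -/
def ImA (T Ts : H →L[ℂ] H) : H →L[ℂ] H := (2 * Complex.I)⁻¹ • (T - Ts)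

/-!
Since `A ≥ 0` factors as `A = B⋆B`, the semi-inner product `⟨x, y⟩_A` is the genuine inner product
`⟪B y, B x⟫`, so it suffices to work in an inner product space. There, with `‖e‖ = 1` and `P` the
orthogonal projection onto `ℂ e`, `α ⟪e, u⟫ ⟪v, e⟫ = ⟪v, u⟫ - ⟪v, (1 - α P) u⟫`, and `1 - α P` acts
as `1` on `e⊥` and as `1 - α` on `e`, so its norm is `max 1 ‖α - 1‖`.
-/

section InnerProductSpace

variable {𝕜 E : Type*} [RCLike 𝕜] [NormedAddCommGroup E] [InnerProductSpace 𝕜 E]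

theorem norm_sub_smul_inner_smul_le {e : E} (he : ‖e‖ = 1) (x : E) (α : 𝕜) :
    ‖x - (α * inner 𝕜 e x) • e‖ ≤ max 1 ‖α - 1‖ * ‖x‖ := by
  set a := inner 𝕜 e x
  set x₀ := x - a • e
  have horth : ∀ c : 𝕜, inner 𝕜 x₀ (c • e) = 0 := by
    intro c
    rw [inner_smul_right, ← inner_conj_symm, inner_sub_right, inner_smul_right,
      inner_self_eq_norm_sq_to_K, he]
    simp [a]
  have hx : ‖x‖ ^ 2 = ‖x₀‖ ^ 2 + ‖a‖ ^ 2 := by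
    have h := norm_add_sq_eq_norm_sq_add_norm_sq_of_inner_eq_zero x₀ (a • e) (horth a)
    rw [sub_add_cancel, norm_smul, he, mul_one] at h
    rw [sq, sq, sq, h]
  have hαx : ‖x - (α * a) • e‖ ^ 2 = ‖x₀‖ ^ 2 + ‖α - 1‖ ^ 2 * ‖a‖ ^ 2 := by
    have h := norm_add_sq_eq_norm_sq_add_norm_sq_of_inner_eq_zero x₀ (((1 - α) * a) • e)
      (horth _)
    rw [show x₀ + ((1 - α) * a) • e = x - (α * a) • e by simp only [x₀]; module,
      norm_smul, he, mul_one, norm_mul, norm_sub_rev 1 α] at h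
    rw [sq, sq, sq, sq, h]
    ring
  have hM : 1 ≤ max 1 ‖α - 1‖ ^ 2 := one_le_pow₀ (le_max_left _ _)
  have hM' : ‖α - 1‖ ^ 2 ≤ max 1 ‖α - 1‖ ^ 2 :=
    pow_le_pow_left₀ (norm_nonneg _) (le_max_right _ _) 2
  rw [← pow_le_pow_iff_left₀ (norm_nonneg _) (by positivity) two_ne_zero, hαx, mul_pow, hx]
  nlinarith [mul_le_mul_of_nonneg_right hM (sq_nonneg ‖x₀‖),
    mul_le_mul_of_nonneg_right hM' (sq_nonneg ‖a‖)]

theorem norm_inner_mul_inner_le {e : E} (he : ‖e‖ = 1) (u v : E) {α : 𝕜} (hα : α ≠ 0) :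
    ‖inner 𝕜 e u * inner 𝕜 v e‖ ≤ (‖inner 𝕜 v u‖ + max 1 ‖α - 1‖ * ‖u‖ * ‖v‖) / ‖α‖ := by
  have key : α * (inner 𝕜 e u * inner 𝕜 v e) =
      inner 𝕜 v u - inner 𝕜 v (u - (α * inner 𝕜 e u) • e) := by
    rw [inner_sub_right, inner_smul_right]
    ring
  rw [le_div_iff₀ (norm_pos_iff.mpr hα)]
  calc ‖inner 𝕜 e u * inner 𝕜 v e‖ * ‖α‖
      = ‖inner 𝕜 v u - inner 𝕜 v (u - (α * inner 𝕜 e u) • e)‖ := by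
        rw [mul_comm, ← norm_mul, key]
    _ ≤ ‖inner 𝕜 v u‖ + ‖inner 𝕜 v (u - (α * inner 𝕜 e u) • e)‖ := norm_sub_le _ _
    _ ≤ ‖inner 𝕜 v u‖ + ‖v‖ * ‖u - (α * inner 𝕜 e u) • e‖ := by
        grw [norm_inner_le_norm v (u - _)]
    _ ≤ ‖inner 𝕜 v u‖ + ‖v‖ * (max 1 ‖α - 1‖ * ‖u‖) := by
        grw [norm_sub_smul_inner_smul_le he]
    _ = ‖inner 𝕜 v u‖ + max 1 ‖α - 1‖ * ‖u‖ * ‖v‖ := by ring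

end InnerProductSpace

theorem innerA_star_mul_self (B : H →L[ℂ] H) (x y : H) :
    innerA (star B * B) x y = ⟪B y, B x⟫ := by
  rw [innerA, ContinuousLinearMap.star_eq_adjoint]
  exact ContinuousLinearMap.adjoint_inner_right B y (B x)

theorem normA_star_mul_self (B : H →L[ℂ] H) (x : H) : normA (star B * B) x = ‖B x‖ := by
  rw [normA, innerA_star_mul_self, inner_self_eq_norm_sq_to_K]
  norm_cast
  exact Real.sqrt_sq (norm_nonneg _)

theorem stmt7_general (A : H →L[ℂ] H) (hA : A.IsPositive)
    (x y e : H) (he : normA A e = 1) (α : ℂ) (hα : α ≠ 0) :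
    ‖innerA A x e * innerA A e y‖
      ≤ (‖innerA A x y‖
          + max 1 ‖α - 1‖ * normA A x * normA A y) / ‖α‖ := by
  obtain ⟨B, rfl⟩ := CStarAlgebra.nonneg_iff_eq_star_mul_self.mp
    ((ContinuousLinearMap.nonneg_iff_isPositive A).mpr hA)
  simp only [innerA_star_mul_self, normA_star_mul_self] at he ⊢
  exact norm_inner_mul_inner_le he (B x) (B y) hα

theorem stmt7 (A : H →L[ℂ] H) (hA : A.IsPositive) (hA0 : A ≠ 0)
    (x y e : H) (he : normA A e = 1) (α : ℂ) (hα : α ≠ 0) :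
    ‖innerA A x e * innerA A e y‖
      ≤ (‖innerA A x y‖
          + max 1 ‖α - 1‖ * normA A x * normA A y) / ‖α‖ :=
  stmt7_general A hA x y e he α hα
end
end

section
/- Let B and C be bounded linear operators on H admitting A-adjoints. Then (1/2)·max{ (w_A(B+C))² + (c_A(B−C))², (w_A(B−C))² + (c_A(B+C))² } ≤ (w_{A,e}(B,C))². -/
/-! By the parallelogram law in `ℂ`, every `x` with `‖x‖_A = 1` satisfies
`|⟨(B+C)x,x⟩_A|² + |⟨(B-C)x,x⟩_A|² = 2 (|⟨Bx,x⟩_A|² + |⟨Cx,x⟩_A|²) ≤ 2 w_{A,e}(B,C)²`;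
taking the supremum over `x` in the first term and the infimum in the second bounds each entry
of the maximum.

The supremum defining `w_{A,e}(B,C)` has to be finite (an unbounded `sSup` is `0` in Lean).
This is where the `A`-adjoints enter: `‖Bx‖_A² = ⟨B♯Bx, x⟩_A`, and the `A`-selfadjoint operator
`D = B♯B` satisfies `‖Dx‖_A ≤ ‖D‖ ‖x‖_A`, obtained by iterating the Cauchy–Schwarz bound
`‖Dx‖_A² ≤ ‖D²x‖_A ‖x‖_A` along the powers `D^(2^n)` and letting `n → ∞`. -/

noncomputable section

open scoped ComplexInnerProductSpace

variable {H : Type*} [NormedAddCommGroup H] [InnerProductSpace ℂ H] [CompleteSpace H]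

section SemiInnerProduct

variable {E : Type*} [NormedAddCommGroup E] [InnerProductSpace ℂ E] {A : E →L[ℂ] E}

/-- The form `(x, y) ↦ ⟪x, A y⟫`: its norm is `normA A`, its inner product is `innerA A` with
the arguments swapped. -/
abbrev ContinuousLinearMap.IsPositive.preInnerProductCore (hA : A.IsPositive) :
    PreInnerProductSpace.Core ℂ E where
  inner x y := ⟪x, A y⟫
  conj_inner_symm x y := by rw [inner_conj_symm]; exact hA.isSymmetric x y
  re_inner_nonneg x := hA.re_inner_nonneg_right x
  add_left _ _ _ := inner_add_left _ _ _
  smul_left _ _ _ := inner_smul_left _ _ _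

lemma innerA_conj_symm (hA : A.IsPositive) (x y : E) :
    starRingEnd ℂ (innerA A x y) = innerA A y x :=
  hA.preInnerProductCore.conj_inner_symm x y

lemma normA_nonneg (x : E) : 0 ≤ normA A x := Real.sqrt_nonneg _

lemma normA_sq (hA : A.IsPositive) (x : E) : normA A x ^ 2 = (innerA A x x).re :=
  Real.sq_sqrt (hA.re_inner_nonneg_right x)

lemma norm_innerA_le (hA : A.IsPositive) (x y : E) :
    ‖innerA A x y‖ ≤ normA A x * normA A y :=
  mul_comm (normA A y) _ ▸
    @InnerProductSpace.Core.norm_inner_le_norm ℂ E _ _ _ hA.preInnerProductCore y x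

lemma normA_le_sqrt_norm_mul_norm (x : E) : normA A x ≤ √‖A‖ * ‖x‖ := by
  rw [← Real.sqrt_sq (norm_nonneg x), ← Real.sqrt_mul (norm_nonneg A)]
  refine Real.sqrt_le_sqrt ((Complex.re_le_norm _).trans ?_)
  calc ‖innerA A x x‖ ≤ ‖x‖ * ‖A x‖ := norm_inner_le_norm _ _
    _ ≤ ‖x‖ * (‖A‖ * ‖x‖) := by gcongr; exact A.le_opNorm x
    _ = ‖A‖ * ‖x‖ ^ 2 := by ring

lemma norm_innerA_add_sq_add_norm_innerA_sub_sq (B C : E →L[ℂ] E) (x : E) :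
    ‖innerA A ((B + C) x) x‖ ^ 2 + ‖innerA A ((B - C) x) x‖ ^ 2 =
      2 * (‖innerA A (B x) x‖ ^ 2 + ‖innerA A (C x) x‖ ^ 2) := by
  simp only [innerA, add_apply, sub_apply, map_add, map_sub, inner_add_right, inner_sub_right]
  exact parallelogram_law_with_norm ℂ _ _

end SemiInnerProduct

lemma le_of_forall_pow_two_pow_le {a b K : ℝ} (hb : 0 ≤ b)
    (h : ∀ n : ℕ, a ^ 2 ^ n ≤ K * b ^ (2 ^ n - 1)) : a ≤ b := by
  by_contra! hba
  have ha : 0 < a := hb.trans_lt hba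
  set r := b / a
  have hr0 : 0 ≤ r := div_nonneg hb ha.le
  have hr1 : r < 1 := (div_lt_one ha).mpr hba
  have hK : 0 ≤ K := ha.le.trans (by simpa using h 0)
  have hbound : ∀ n : ℕ, a ≤ K * r ^ n := fun n => by
    set m := 2 ^ n - 1
    have hm : 2 ^ n = m + 1 := by have := Nat.one_le_two_pow (n := n); omega
    have hbr : b = r * a := (div_mul_cancel₀ b ha.ne').symm
    have key : a * a ^ m ≤ K * r ^ m * a ^ m := by
      simpa [hm, hbr, pow_succ', mul_pow, mul_assoc] using h n
    calc a ≤ K * r ^ m := le_of_mul_le_mul_right (by linarith) (pow_pos ha m)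
      _ ≤ K * r ^ n := mul_le_mul_of_nonneg_left
        (pow_le_pow_of_le_one hr0 hr1.le (Nat.le_sub_one_of_lt Nat.lt_two_pow_self)) hK
  have hlim : Filter.Tendsto (fun n : ℕ => K * r ^ n) Filter.atTop (nhds 0) := by
    simpa using (tendsto_pow_atTop_nhds_zero_of_lt_one hr0 hr1).const_mul K
  exact ha.not_ge (ge_of_tendsto' hlim hbound)

lemma sSup_sq_add_sInf_sq_le {α : Type*} {p : α → Prop} {f g : α → ℝ} {K : ℝ} (hK : 0 ≤ K)
    (hf : ∀ x, 0 ≤ f x) (hg : ∀ x, 0 ≤ g x) (h : ∀ x, p x → f x ^ 2 + g x ^ 2 ≤ K) :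
    sSup {r | ∃ x, p x ∧ r = f x} ^ 2 + sInf {r | ∃ x, p x ∧ r = g x} ^ 2 ≤ K := by
  by_cases hp : ∃ x, p x
  swap
  · simpa [not_exists.mp hp] using hK
  obtain ⟨x₀, hx₀⟩ := hp
  set w := sSup {r | ∃ x, p x ∧ r = f x}
  set c := sInf {r | ∃ x, p x ∧ r = g x}
  have hc0 : 0 ≤ c := Real.sInf_nonneg (by rintro _ ⟨y, -, rfl⟩; exact hg y)
  have hfc : ∀ x, p x → f x ^ 2 ≤ K - c ^ 2 := fun x hx => by
    have : c ≤ g x := csInf_le ⟨0, by rintro _ ⟨y, -, rfl⟩; exact hg y⟩ ⟨x, hx, rfl⟩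
    nlinarith [h x hx]
  have hKc : 0 ≤ K - c ^ 2 := (sq_nonneg _).trans (hfc x₀ hx₀)
  have hw0 : 0 ≤ w := Real.sSup_nonneg (by rintro _ ⟨y, -, rfl⟩; exact hf y)
  have hw : w ≤ √(K - c ^ 2) := Real.sSup_le
    (by rintro _ ⟨x, hx, rfl⟩; exact (Real.le_sqrt (hf x) hKc).mpr (hfc x hx))
    (Real.sqrt_nonneg _)
  linarith [(Real.le_sqrt hw0 hKc).mp hw]

section SelfAdjointA

variable {E : Type*} [NormedAddCommGroup E] [InnerProductSpace ℂ E] {A D : E →L[ℂ] E}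

def IsSelfAdjointA (A D : E →L[ℂ] E) : Prop :=
  ∀ x y, innerA A (D x) y = innerA A x (D y)

lemma IsSelfAdjointA.sq (hD : IsSelfAdjointA A D) : IsSelfAdjointA A (D ^ 2) := fun x y => by
  simp only [pow_two, mul_apply_eq_comp]; rw [hD, hD]

lemma IsSelfAdjointA.normA_apply_sq_le (hA : A.IsPositive) (hD : IsSelfAdjointA A D) (x : E) :
    normA A (D x) ^ 2 ≤ normA A ((D ^ 2) x) * normA A x := by
  rw [normA_sq hA, ← hD, pow_two, mul_apply_eq_comp]
  exact (Complex.re_le_norm _).trans (norm_innerA_le hA _ _)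

lemma IsSelfAdjointA.normA_apply_pow_le (hA : A.IsPositive) (hD : IsSelfAdjointA A D)
    (x : E) (n : ℕ) :
    normA A (D x) ^ 2 ^ n ≤ normA A ((D ^ 2 ^ n) x) * normA A x ^ (2 ^ n - 1) := by
  induction n generalizing D with
  | zero => simp
  | succ n ih =>
    have hpow : 2 ^ (n + 1) - 1 = (2 ^ n - 1) + 2 ^ n := by
      have := Nat.one_le_two_pow (n := n); rw [pow_succ]; omega
    have hD2 : (D ^ 2) ^ 2 ^ n = D ^ 2 ^ (n + 1) := by rw [← pow_mul, ← pow_succ']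
    calc normA A (D x) ^ 2 ^ (n + 1) = (normA A (D x) ^ 2) ^ 2 ^ n := by
          rw [← pow_mul, pow_succ']
      _ ≤ (normA A ((D ^ 2) x) * normA A x) ^ 2 ^ n := by
          gcongr; exact hD.normA_apply_sq_le hA x
      _ = normA A ((D ^ 2) x) ^ 2 ^ n * normA A x ^ 2 ^ n := mul_pow _ _ _
      _ ≤ normA A (((D ^ 2) ^ 2 ^ n) x) * normA A x ^ (2 ^ n - 1) * normA A x ^ 2 ^ n :=
          mul_le_mul_of_nonneg_right (ih hD.sq) (pow_nonneg (normA_nonneg x) _)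
      _ = normA A ((D ^ 2 ^ (n + 1)) x) * normA A x ^ (2 ^ (n + 1) - 1) := by
          rw [hD2, hpow, mul_assoc, ← pow_add]

lemma IsSelfAdjointA.normA_apply_le (hA : A.IsPositive) (hD : IsSelfAdjointA A D) (x : E) :
    normA A (D x) ≤ ‖D‖ * normA A x := by
  refine le_of_forall_pow_two_pow_le (K := √‖A‖ * ‖x‖ * ‖D‖)
    (mul_nonneg (norm_nonneg D) (normA_nonneg x)) fun n => ?_
  set m := 2 ^ n - 1
  have hm : 2 ^ n = m + 1 := by have := Nat.one_le_two_pow (n := n); omega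
  have hDx : ‖(D ^ 2 ^ n) x‖ ≤ ‖D‖ ^ 2 ^ n * ‖x‖ :=
    ((D ^ 2 ^ n).le_opNorm x).trans (by gcongr; exact norm_pow_le' D (by positivity))
  calc normA A (D x) ^ 2 ^ n ≤ normA A ((D ^ 2 ^ n) x) * normA A x ^ m :=
        hD.normA_apply_pow_le hA x n
    _ ≤ √‖A‖ * (‖D‖ ^ 2 ^ n * ‖x‖) * normA A x ^ m :=
        mul_le_mul_of_nonneg_right ((normA_le_sqrt_norm_mul_norm _).trans
          (mul_le_mul_of_nonneg_left hDx (Real.sqrt_nonneg _))) (pow_nonneg (normA_nonneg x) _)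
    _ = √‖A‖ * ‖x‖ * ‖D‖ * (‖D‖ * normA A x) ^ m := by rw [hm]; ring

end SelfAdjointA

section AAdjoint

variable {A B Bs : H →L[ℂ] H}

lemma innerA_apply_eq_of_comp_eq (hB : A.comp Bs = (ContinuousLinearMap.adjoint B).comp A)
    (x y : H) : innerA A (Bs y) x = innerA A y (B x) := by
  have h : A (Bs y) = ContinuousLinearMap.adjoint B (A y) :=
    congrArg (fun T : H →L[ℂ] H => T y) hB
  simp only [innerA, h, ContinuousLinearMap.adjoint_inner_right]

lemma isSelfAdjointA_mul_of_comp_eq (hA : A.IsPositive)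
    (hB : A.comp Bs = (ContinuousLinearMap.adjoint B).comp A) :
    IsSelfAdjointA A (Bs * B) := fun x y => by
  rw [mul_apply_eq_comp, mul_apply_eq_comp, innerA_apply_eq_of_comp_eq hB,
    ← innerA_conj_symm hA (Bs (B y)) x, innerA_apply_eq_of_comp_eq hB, innerA_conj_symm hA]

lemma normA_apply_le_of_comp_eq (hA : A.IsPositive)
    (hB : A.comp Bs = (ContinuousLinearMap.adjoint B).comp A) (x : H) :
    normA A (B x) ≤ √‖Bs * B‖ * normA A x := by
  have hsq : normA A (B x) ^ 2 ≤ ‖Bs * B‖ * normA A x ^ 2 :=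
    calc normA A (B x) ^ 2 = (innerA A ((Bs * B) x) x).re := by
          rw [normA_sq hA, mul_apply_eq_comp, innerA_apply_eq_of_comp_eq hB]
      _ ≤ normA A ((Bs * B) x) * normA A x :=
          (Complex.re_le_norm _).trans (norm_innerA_le hA _ _)
      _ ≤ ‖Bs * B‖ * normA A x * normA A x :=
          mul_le_mul_of_nonneg_right
            ((isSelfAdjointA_mul_of_comp_eq hA hB).normA_apply_le hA x) (normA_nonneg x)
      _ = ‖Bs * B‖ * normA A x ^ 2 := by ring
  rw [← Real.sqrt_sq (normA_nonneg (B x)), ← Real.sqrt_sq (normA_nonneg x),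
    ← Real.sqrt_mul (norm_nonneg _)]
  exact Real.sqrt_le_sqrt hsq

lemma norm_innerA_apply_le_of_comp_eq (hA : A.IsPositive)
    (hB : A.comp Bs = (ContinuousLinearMap.adjoint B).comp A) {x : H} (hx : normA A x = 1) :
    ‖innerA A (B x) x‖ ≤ √‖Bs * B‖ := by
  calc ‖innerA A (B x) x‖ ≤ normA A (B x) * normA A x := norm_innerA_le hA _ _
    _ ≤ √‖Bs * B‖ := by simpa [hx] using normA_apply_le_of_comp_eq hA hB x

end AAdjoint

lemma sq_norm_innerA_add_sq_le_wAe_sq {A B C Bs Cs : H →L[ℂ] H} (hA : A.IsPositive)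
    (hB : A.comp Bs = (ContinuousLinearMap.adjoint B).comp A)
    (hC : A.comp Cs = (ContinuousLinearMap.adjoint C).comp A) {x : H} (hx : normA A x = 1) :
    ‖innerA A (B x) x‖ ^ 2 + ‖innerA A (C x) x‖ ^ 2 ≤ wAe A B C ^ 2 := by
  have hbdd : BddAbove {r : ℝ | ∃ x : H, normA A x = 1 ∧
      r = √(‖innerA A (B x) x‖ ^ 2 + ‖innerA A (C x) x‖ ^ 2)} := by
    refine ⟨√(‖Bs * B‖ + ‖Cs * C‖), ?_⟩
    rintro r ⟨y, hy, rfl⟩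
    gcongr
    · exact (Real.le_sqrt (norm_nonneg _) (norm_nonneg _)).mp
        (norm_innerA_apply_le_of_comp_eq hA hB hy)
    · exact (Real.le_sqrt (norm_nonneg _) (norm_nonneg _)).mp
        (norm_innerA_apply_le_of_comp_eq hA hC hy)
  exact (Real.sqrt_le_iff.mp (le_csSup hbdd ⟨x, hx, rfl⟩)).2

theorem stmt13_general (A : H →L[ℂ] H) (hA : A.IsPositive)
    (B C Bs Cs : H →L[ℂ] H)
    (hB : A.comp Bs = (ContinuousLinearMap.adjoint B).comp A)
    (hC : A.comp Cs = (ContinuousLinearMap.adjoint C).comp A) :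
    (1/2) * max ((wA A (B + C))^2 + (cA A (B - C))^2)
        ((wA A (B - C))^2 + (cA A (B + C))^2)
      ≤ (wAe A B C)^2 := by
  have hpar : ∀ x, normA A x = 1 →
      ‖innerA A ((B + C) x) x‖ ^ 2 + ‖innerA A ((B - C) x) x‖ ^ 2 ≤ 2 * wAe A B C ^ 2 :=
    fun x hx => by
      rw [norm_innerA_add_sq_add_norm_innerA_sub_sq]
      gcongr
      exact sq_norm_innerA_add_sq_le_wAe_sq hA hB hC hx
  have hK : 0 ≤ 2 * wAe A B C ^ 2 := by positivity
  have hnorm : ∀ T : H →L[ℂ] H, ∀ x, 0 ≤ ‖innerA A (T x) x‖ := fun _ _ => norm_nonneg _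
  rw [one_div, inv_mul_le_iff₀ two_pos, max_le_iff]
  exact ⟨sSup_sq_add_sInf_sq_le hK (hnorm _) (hnorm _) hpar,
    sSup_sq_add_sInf_sq_le hK (hnorm _) (hnorm _) fun x hx =>
      (add_comm _ _).trans_le (hpar x hx)⟩

theorem stmt13 (A : H →L[ℂ] H) (hA : A.IsPositive) (hA0 : A ≠ 0)
    (B C Bs Cs : H →L[ℂ] H)
    (hB : A.comp Bs = (ContinuousLinearMap.adjoint B).comp A)
    (hC : A.comp Cs = (ContinuousLinearMap.adjoint C).comp A) :
    (1/2) * max ((wA A (B + C))^2 + (cA A (B - C))^2)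
        ((wA A (B - C))^2 + (cA A (B + C))^2)
      ≤ (wAe A B C)^2 :=
  stmt13_general A hA B C Bs Cs hB hC
end
end
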